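/- The quiver Γ^{16}_{1,2,4} of coloured oriented single and paired diagonals of a regular 16-gon is isomorphic as a stable translation quiver to Z E_8/⟨τ^{-16}⟩; this quotient is the Auslander–Reiten quiver of the cluster category C_{E_8} = D^b(mod kE_8)/τ^{-1}Σ, on which the shift Σ acts as τ^{-15}. -/

import Mathlib

/-!
Coloured oriented single and paired diagonals in a regular polygon, following
L. Lamberti, "Combinatorial model for the cluster categories of type E".

The vertices of the regular `m`-gon `Π` are labelled by `ZMod m` (clockwise).
A coloured oriented diagonal `[i,j]_c` is encoded by the structure `Diag`;
the colour `P` encodes a *paired* diagonal `[i,j]_P = {[i,j]_R, [j,i]_B}`.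
-/

inductive Colour : Type
  | R : Colour
  | B : Colour
  | P : Colour
deriving DecidableEq

/-- A coloured oriented (single or paired) diagonal `[i,j]_c` of the regular
`m`-gon (for `m = 0` we interpret `ZMod 0 = ℤ` as the infinite-sided polygon). -/
structure Diag (m : ℕ) where
  i : ZMod m
  j : ZMod m
  c : Colour
deriving DecidableEq

/-- The simultaneous change of colour and orientation:
`ρ([i,j]_R) = [j,i]_B`, `ρ([i,j]_B) = [j,i]_R`, `ρ([i,j]_P) = [i,j]_P`. -/
def rho {m : ℕ} : Diag m → Diag m
  | ⟨i, j, Colour.R⟩ => ⟨j, i, Colour.B⟩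
  | ⟨i, j, Colour.B⟩ => ⟨j, i, Colour.R⟩
  | ⟨i, j, Colour.P⟩ => ⟨i, j, Colour.P⟩

/-- The anticlockwise rotation `[i,j]_c ↦ [i-1,j-1]_c`. -/
def shiftD {m : ℕ} (d : Diag m) : Diag m := ⟨d.i - 1, d.j - 1, d.c⟩

/-- The slice of `Π_{r,s,t}` based at the vertex `i` of `Π`:
the paired diagonals `[i,i+2]_P, …, [i,i+r+2]_P`, the red single diagonals
`[i,i+r+3]_R, …, [i,i+r+s+2]_R` and the blue single diagonals
`[i+r+3,i]_B, …, [i+r+t+2,i]_B`. -/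
def PiSetAt (r s t : ℕ) {m : ℕ} (i : ZMod m) : Set (Diag m) :=
  {d | (∃ k : ℕ, 2 ≤ k ∧ k ≤ r + 2 ∧ d = ⟨i, i + (k : ZMod m), Colour.P⟩) ∨
       (∃ k : ℕ, r + 3 ≤ k ∧ k ≤ r + s + 2 ∧ d = ⟨i, i + (k : ZMod m), Colour.R⟩) ∨
       (∃ k : ℕ, r + 3 ≤ k ∧ k ≤ r + t + 2 ∧ d = ⟨i + (k : ZMod m), i, Colour.B⟩)}

/-- The set `Π_{r,s,t}` of coloured oriented single and paired diagonals of the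
regular `m`-gon associated to the tree `T_{r,s,t}`. -/
def PiSet (r s t m : ℕ) : Set (Diag m) := ⋃ i : ZMod m, PiSetAt r s t i

open Classical in
/-- The translation `τ` on coloured oriented diagonals: the anticlockwise
rotation `[i,j]_c ↦ [i-1,j-1]_c`, composed with `ρ^{m}` on the first slice
`Π_{r,s,t}|_1` when the tree is symmetric (`s = t`). -/
noncomputable def tauD (r s t : ℕ) {m : ℕ} (d : Diag m) : Diag m :=
  if s = t ∧ d ∈ PiSetAt r s t (1 : ZMod m) then rho^[m] (shiftD d) else shiftD d

/-- Minimal clockwise rotations (before the colour adjustment at the seam):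
`[k,l]_c → [k,l+1]_c`, `[k,l]_c → [k+1,l]_c`, together with
`[k,k+r+2]_P → [k,k+r+3]_R`, `[k,k+r+2]_P → [k+r+3,k]_B`,
`[k,k+r+3]_R → [k+1,k+r+3]_P` and `[k+r+3,k]_B → [k+1,k+r+3]_P`. -/
def Rot (r : ℕ) {m : ℕ} (a b : Diag m) : Prop :=
  b = ⟨a.i, a.j + 1, a.c⟩ ∨ b = ⟨a.i + 1, a.j, a.c⟩ ∨
  (∃ k : ZMod m, a = ⟨k, k + ((r : ZMod m) + 2), Colour.P⟩ ∧
    (b = ⟨k, k + ((r : ZMod m) + 3), Colour.R⟩ ∨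
     b = ⟨k + ((r : ZMod m) + 3), k, Colour.B⟩)) ∨
  (∃ k : ZMod m,
    (a = ⟨k, k + ((r : ZMod m) + 3), Colour.R⟩ ∨
     a = ⟨k + ((r : ZMod m) + 3), k, Colour.B⟩) ∧
    b = ⟨k + 1, k + ((r : ZMod m) + 3), Colour.P⟩)

/-- In the symmetric case `s = t` with an odd-sided polygon, the arrows whose
source lies in `τ(Π_{r,t,t}|_1)` and whose (unadjusted) target lies in the
first slice `Π_{r,t,t}|_1` additionally change colour and orientation. -/
def SeamTwist (r s t m : ℕ) (a b₀ : Diag m) : Prop :=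
  s = t ∧ Odd m ∧ a ∈ (tauD r s t) '' (PiSetAt r s t (1 : ZMod m)) ∧
    b₀ ∈ PiSetAt r s t (1 : ZMod m)

/-- The arrows of the quiver `Γ^{m}_{r,s,t}`: minimal clockwise rotations
between elements of `Π_{r,s,t}`, adjusted by `ρ` at the seam. -/
def ArrowD (r s t m : ℕ) (a b : Diag m) : Prop :=
  a ∈ PiSet r s t m ∧ b ∈ PiSet r s t m ∧
    ∃ b₀, Rot r a b₀ ∧
      ((SeamTwist r s t m a b₀ ∧ b = rho b₀) ∨ (¬ SeamTwist r s t m a b₀ ∧ b = b₀))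

/-- The vertices of the tree `T_{r,s,t}`: a central vertex together with three
legs having `r`, `s`, `t` vertices respectively. -/
inductive TVert (r s t : ℕ) : Type
  | center : TVert r s t
  | legA : Fin r → TVert r s t
  | legB : Fin s → TVert r s t
  | legC : Fin t → TVert r s t
deriving DecidableEq

/-- An orientation of the tree `T_{r,s,t}`: the `A`-leg points towards the
centre, the `B`- and `C`-legs point away from it. -/
def TArrow {r s t : ℕ} (x y : TVert r s t) : Prop :=
  (∃ k l : Fin r, (l : ℕ) + 1 = (k : ℕ) ∧ x = TVert.legA k ∧ y = TVert.legA l) ∨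
  (∃ k : Fin r, (k : ℕ) = 0 ∧ x = TVert.legA k ∧ y = TVert.center) ∨
  (∃ k : Fin s, (k : ℕ) = 0 ∧ x = TVert.center ∧ y = TVert.legB k) ∨
  (∃ k l : Fin s, (k : ℕ) + 1 = (l : ℕ) ∧ x = TVert.legB k ∧ y = TVert.legB l) ∨
  (∃ k : Fin t, (k : ℕ) = 0 ∧ x = TVert.center ∧ y = TVert.legC k) ∨
  (∃ k l : Fin t, (k : ℕ) + 1 = (l : ℕ) ∧ x = TVert.legC k ∧ y = TVert.legC l)

/-- The order-two graph automorphism of a symmetric tree `T_{r,t,t}`,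
exchanging its two legs of length `t`. -/
def treeRho {r t : ℕ} : TVert r t t → TVert r t t
  | TVert.center => TVert.center
  | TVert.legA k => TVert.legA k
  | TVert.legB k => TVert.legC k
  | TVert.legC k => TVert.legB k

/-- `treeRho` as a permutation. -/
def treeRhoPerm (r t : ℕ) : Equiv.Perm (TVert r t t) :=
  Function.Involutive.toPerm treeRho (by intro x; cases x <;> rfl)

/-- The translation of the repetitive quiver `ℤQ`: `τ(m,i) = (m-1,i)`. -/
def ZTau {V : Type} (x : ℤ × V) : ℤ × V := (x.1 - 1, x.2)

/-- The arrows of the repetitive quiver `ℤQ` of a quiver with arrow relation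
`A`: for each arrow `i → j` of `Q` there are arrows `(m,i) → (m,j)` and
`(m,j) → (m+1,i)`. -/
def ZArrow {V : Type} (A : V → V → Prop) (x y : ℤ × V) : Prop :=
  (y.1 = x.1 ∧ A x.2 y.2) ∨ (y.1 = x.1 + 1 ∧ A y.2 x.2)

/-- The automorphism `τ^{-m} σ` of `ℤQ` given by shifting `m` steps to the
right and applying the graph automorphism `σ` of `Q`. -/
def shiftPerm {V : Type} (m : ℕ) (σ : Equiv.Perm V) : Equiv.Perm (ℤ × V) :=
  (Equiv.addRight (m : ℤ)).prodCongr σ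

/-- `φ` exhibits the quiver `Γ^{m}_{r,s,t}` (with vertex set `PiSet r s t m`,
arrow relation `ArrowD` and translation `tauD`) as the quotient of the
repetitive quiver `ℤQ` (with arrow relation `ZArrow A` and translation `ZTau`)
by the cyclic group generated by the automorphism `g`, as stable translation
quivers: `φ` is surjective onto the vertex set, its fibres are exactly the
`g`-orbits, it commutes with the translations, and the arrows of
`Γ^{m}_{r,s,t}` correspond exactly to the `g`-orbits of arrows of `ℤQ`. -/
def IsQuotientIso (r s t m : ℕ) {V : Type} (A : V → V → Prop)
    (g : Equiv.Perm (ℤ × V)) (φ : ℤ × V → Diag m) : Prop :=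
  (∀ x, φ x ∈ PiSet r s t m) ∧
  (∀ d ∈ PiSet r s t m, ∃ x, φ x = d) ∧
  (∀ x y, φ x = φ y ↔ ∃ k : ℤ, (g ^ k) x = y) ∧
  (∀ x, φ (ZTau x) = tauD r s t (φ x)) ∧
  (∀ x y, ArrowD r s t m (φ x) (φ y) ↔
    ∃ y', (∃ k : ℤ, (g ^ k) y = y') ∧ ZArrow A x y')


/-!
`Π_{1,2,4}` is the disjoint union of the sixteen rotations of one slice, and a slice is a copy
of `E₈ = T_{1,2,4}`; sending `(n, v) ∈ ℤ × E₈` to the diagonal `v` of the slice rotated by `n`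
identifies `Π_{1,2,4}` with `ℤ E₈ / ⟨τ^{-16}⟩`. As the legs of `T_{1,2,4}` have distinct
lengths there is no seam twist, so `τ` is the rotation `[i,j] ↦ [i-1,j-1]`, i.e. `n ↦ n - 1`.
A minimal clockwise rotation either stays in a slice, along an arrow `v → w` of `E₈`, or moves
on to the next slice, against an arrow `w → v`, exactly as in `ℤ E₈`. Everything commutes with
rotations, so these two facts need only be checked on the slice at `0`: a finite computation.
-/

instance (r s t : ℕ) : Fintype (TVert r s t) :=
  Fintype.ofEquiv (Unit ⊕ Fin r ⊕ Fin s ⊕ Fin t)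
    { toFun := fun
        | .inl _ => .center
        | .inr (.inl k) => .legA k
        | .inr (.inr (.inl k)) => .legB k
        | .inr (.inr (.inr k)) => .legC k
      invFun := fun
        | .center => .inl ()
        | .legA k => .inr (.inl k)
        | .legB k => .inr (.inr (.inl k))
        | .legC k => .inr (.inr (.inr k))
      left_inv := by rintro (_ | _ | _ | _) <;> rfl
      right_inv := by rintro (_ | _ | _ | _) <;> rfl }

instance {r s t : ℕ} (v w : TVert r s t) : Decidable (TArrow v w) := by
  unfold TArrow; infer_instance

instance {r m : ℕ} [NeZero m] (a b : Diag m) : Decidable (Rot r a b) := by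
  unfold Rot; infer_instance

section RepetitiveQuiver

variable {V : Type}

lemma shiftPerm_one_apply (m : ℕ) (x : ℤ × V) :
    shiftPerm m (1 : Equiv.Perm V) x = (x.1 + m, x.2) :=
  rfl

lemma shiftPerm_one_zpow_apply (m : ℕ) (k : ℤ) (x : ℤ × V) :
    (shiftPerm m (1 : Equiv.Perm V) ^ k) x = (x.1 + k * m, x.2) := by
  induction k using Int.induction_on generalizing x with
  | zero => simp
  | succ n ih =>
    rw [zpow_add_one, Equiv.Perm.mul_apply, shiftPerm_one_apply, ih]
    ring_nf
  | pred n ih =>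
    have hinv : (shiftPerm m (1 : Equiv.Perm V))⁻¹ x = (x.1 - m, x.2) := by
      rw [Equiv.Perm.inv_eq_iff_eq, shiftPerm_one_apply, sub_add_cancel]
    rw [zpow_sub_one, Equiv.Perm.mul_apply, hinv, ih]
    ring_nf

lemma exists_shiftPerm_one_zpow_apply_eq_iff (m : ℕ) (x y : ℤ × V) :
    (∃ k : ℤ, (shiftPerm m (1 : Equiv.Perm V) ^ k) x = y) ↔
      (x.1 : ZMod m) = y.1 ∧ x.2 = y.2 := by
  obtain ⟨x₁, x₂⟩ := x
  obtain ⟨y₁, y₂⟩ := y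
  simp only [shiftPerm_one_zpow_apply, ZMod.intCast_eq_intCast_iff_dvd_sub, Prod.mk.injEq]
  constructor
  · rintro ⟨k, rfl, rfl⟩
    exact ⟨⟨k, by ring⟩, rfl⟩
  · rintro ⟨⟨k, hk⟩, rfl⟩
    exact ⟨k, by linarith, rfl⟩

lemma exists_orbit_zArrow_iff (m : ℕ) (A : V → V → Prop) (x y : ℤ × V) :
    (∃ y', (∃ k : ℤ, (shiftPerm m (1 : Equiv.Perm V) ^ k) y = y') ∧ ZArrow A x y') ↔
      ((y.1 : ZMod m) = x.1 ∧ A x.2 y.2) ∨ ((y.1 : ZMod m) = x.1 + 1 ∧ A y.2 x.2) := by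
  simp only [exists_shiftPerm_one_zpow_apply_eq_iff, ZArrow, Prod.exists]
  constructor
  · rintro ⟨y₁', y₂', ⟨hy₁, rfl⟩, ⟨h₁, hA⟩ | ⟨h₁, hA⟩⟩
    · exact Or.inl ⟨by rw [hy₁, h₁], hA⟩
    · exact Or.inr ⟨by rw [hy₁, h₁]; push_cast; rfl, hA⟩
  · rintro (⟨h, hA⟩ | ⟨h, hA⟩)
    · exact ⟨x.1, y.2, ⟨h, rfl⟩, Or.inl ⟨rfl, hA⟩⟩
    · exact ⟨x.1 + 1, y.2, ⟨by push_cast; exact h, rfl⟩, Or.inr ⟨rfl, hA⟩⟩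

end RepetitiveQuiver

section Diagonals

variable {r s t m : ℕ}

def rotateBy (c : ZMod m) (d : Diag m) : Diag m := ⟨d.i + c, d.j + c, d.c⟩

lemma rotateBy_rotateBy (c c' : ZMod m) (d : Diag m) :
    rotateBy c (rotateBy c' d) = rotateBy (c' + c) d := by
  simp [rotateBy, add_assoc]

@[simp]
lemma rotateBy_zero (d : Diag m) : rotateBy 0 d = d := by
  simp [rotateBy]

lemma rotateBy_eq_rotateBy_iff (c c' : ZMod m) (a b : Diag m) :
    rotateBy c a = rotateBy c' b ↔ rotateBy (c - c') a = b := by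
  constructor
  · intro h
    simpa [rotateBy_rotateBy, sub_eq_add_neg] using congrArg (rotateBy (-c')) h
  · rintro rfl
    simp [rotateBy_rotateBy]

lemma shiftD_eq_rotateBy (d : Diag m) : shiftD d = rotateBy (-1) d := by
  simp [shiftD, rotateBy, sub_eq_add_neg]

lemma Rot.rotateBy {a b : Diag m} (h : Rot r a b) (c : ZMod m) :
    Rot r (rotateBy c a) (rotateBy c b) := by
  unfold _root_.rotateBy
  rcases h with rfl | rfl | ⟨k, rfl, rfl | rfl⟩ | ⟨k, rfl | rfl, rfl⟩
  · exact Or.inl (by ring_nf)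
  · exact Or.inr (Or.inl (by ring_nf))
  · exact Or.inr (Or.inr (Or.inl ⟨k + c, by ring_nf, Or.inl (by ring_nf)⟩))
  · exact Or.inr (Or.inr (Or.inl ⟨k + c, by ring_nf, Or.inr (by ring_nf)⟩))
  · exact Or.inr (Or.inr (Or.inr ⟨k + c, Or.inl (by ring_nf), by ring_nf⟩))
  · exact Or.inr (Or.inr (Or.inr ⟨k + c, Or.inr (by ring_nf), by ring_nf⟩))

lemma rot_rotateBy_iff {a b : Diag m} (c : ZMod m) :
    Rot r (rotateBy c a) (rotateBy c b) ↔ Rot r a b := by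
  refine ⟨fun h => ?_, fun h => h.rotateBy c⟩
  simpa [rotateBy_rotateBy, rotateBy] using h.rotateBy (-c)

lemma tauD_of_ne (hst : s ≠ t) (d : Diag m) : tauD r s t d = shiftD d :=
  if_neg fun h => hst h.1

lemma arrowD_iff_of_ne (hst : s ≠ t) (a b : Diag m) :
    ArrowD r s t m a b ↔ a ∈ PiSet r s t m ∧ b ∈ PiSet r s t m ∧ Rot r a b := by
  have hseam (b₀ : Diag m) : ¬ SeamTwist r s t m a b₀ := fun h => hst h.1
  simp [ArrowD, hseam]

end Diagonals

section Slices

variable {r s t m : ℕ}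

/-- The slice `Π_{r,s,t}|_0`; the leg `A` is numbered from the centre outwards, so it runs
backwards along the paired diagonals `[0,2]_P, …, [0,r+1]_P`. -/
def sliceDiag : TVert r s t → Diag m
  | .center => ⟨0, ((r + 2 : ℕ) : ZMod m), .P⟩
  | .legA k => ⟨0, ((k.rev + 2 : ℕ) : ZMod m), .P⟩
  | .legB k => ⟨0, ((r + 3 + k : ℕ) : ZMod m), .R⟩
  | .legC k => ⟨((r + 3 + k : ℕ) : ZMod m), 0, .B⟩

lemma mem_piSetAt_iff (i : ZMod m) (d : Diag m) :
    d ∈ PiSetAt r s t i ↔ ∃ v : TVert r s t, rotateBy i (sliceDiag v) = d := by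
  constructor
  · rintro (⟨k, hk₂, hk, rfl⟩ | ⟨k, hk₃, hk, rfl⟩ | ⟨k, hk₃, hk, rfl⟩)
    · rcases hk.lt_or_eq with hk | rfl
      · refine ⟨.legA (Fin.rev ⟨k - 2, by omega⟩), ?_⟩
        simp [sliceDiag, rotateBy, add_comm, Nat.cast_sub hk₂]
      · exact ⟨.center, by simp [sliceDiag, rotateBy, add_comm]⟩
    · refine ⟨.legB ⟨k - (r + 3), by omega⟩, ?_⟩
      simp [sliceDiag, rotateBy, add_comm, Nat.add_sub_cancel' hk₃]
    · refine ⟨.legC ⟨k - (r + 3), by omega⟩, ?_⟩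
      simp [sliceDiag, rotateBy, add_comm, Nat.add_sub_cancel' hk₃]
  · rintro ⟨v, rfl⟩
    cases v with
    | center => exact Or.inl ⟨r + 2, by omega, le_rfl, by simp [sliceDiag, rotateBy, add_comm]⟩
    | legA k =>
      exact Or.inl ⟨k.rev + 2, by omega, by omega, by simp [sliceDiag, rotateBy, add_comm]⟩
    | legB k =>
      refine Or.inr (Or.inl ⟨r + 3 + k, by omega, by omega, ?_⟩)
      simp [sliceDiag, rotateBy, add_comm]
    | legC k =>
      refine Or.inr (Or.inr ⟨r + 3 + k, by omega, by omega, ?_⟩)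
      simp [sliceDiag, rotateBy, add_comm]

lemma mem_piSet_iff (d : Diag m) :
    d ∈ PiSet r s t m ↔ ∃ (i : ZMod m) (v : TVert r s t), rotateBy i (sliceDiag v) = d := by
  simp [PiSet, mem_piSetAt_iff]

def sliceMap (x : ℤ × TVert r s t) : Diag m := rotateBy (x.1 : ZMod m) (sliceDiag x.2)

lemma rotateBy_sliceDiag_injective
    (hinj : ∀ (c : ZMod m) (v w : TVert r s t),
      rotateBy c (sliceDiag v) = sliceDiag w → c = 0 ∧ v = w)
    {i i' : ZMod m} {v w : TVert r s t}
    (h : rotateBy i (sliceDiag v) = rotateBy i' (sliceDiag w)) : i = i' ∧ v = w := by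
  rw [rotateBy_eq_rotateBy_iff] at h
  obtain ⟨hi, rfl⟩ := hinj _ _ _ h
  exact ⟨sub_eq_zero.mp hi, rfl⟩

lemma rot_rotateBy_sliceDiag_iff
    (hrot : ∀ (c : ZMod m) (v w : TVert r s t), Rot r (sliceDiag v) (rotateBy c (sliceDiag w)) ↔
      (c = 0 ∧ TArrow v w) ∨ (c = 1 ∧ TArrow w v))
    (i i' : ZMod m) (v w : TVert r s t) :
    Rot r (rotateBy i (sliceDiag v)) (rotateBy i' (sliceDiag w)) ↔
      (i' = i ∧ TArrow v w) ∨ (i' = i + 1 ∧ TArrow w v) := by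
  have : rotateBy i' (sliceDiag w) = rotateBy i (rotateBy (i' - i) (sliceDiag w)) := by
    rw [rotateBy_rotateBy, sub_add_cancel]
  rw [this, rot_rotateBy_iff, hrot, sub_eq_zero, sub_eq_iff_eq_add']

theorem isQuotientIso_sliceMap (hst : s ≠ t)
    (hinj : ∀ (c : ZMod m) (v w : TVert r s t),
      rotateBy c (sliceDiag v) = sliceDiag w → c = 0 ∧ v = w)
    (hrot : ∀ (c : ZMod m) (v w : TVert r s t), Rot r (sliceDiag v) (rotateBy c (sliceDiag w)) ↔
      (c = 0 ∧ TArrow v w) ∨ (c = 1 ∧ TArrow w v)) :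
    IsQuotientIso r s t m TArrow (shiftPerm m (1 : Equiv.Perm (TVert r s t))) sliceMap := by
  have hmem (x : ℤ × TVert r s t) : sliceMap x ∈ PiSet r s t m :=
    (mem_piSet_iff _).mpr ⟨_, _, rfl⟩
  refine ⟨hmem, fun d hd => ?_, fun x y => ?_, fun x => ?_, fun x y => ?_⟩
  · obtain ⟨i, v, rfl⟩ := (mem_piSet_iff d).mp hd
    exact ⟨((i.cast : ℤ), v), by rw [sliceMap, ZMod.intCast_zmod_cast]⟩
  · rw [exists_shiftPerm_one_zpow_apply_eq_iff]
    exact ⟨rotateBy_sliceDiag_injective hinj, fun ⟨h₁, h₂⟩ => by rw [sliceMap, h₁, h₂]; rfl⟩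
  · rw [tauD_of_ne hst, shiftD_eq_rotateBy, sliceMap, sliceMap, rotateBy_rotateBy, ZTau]
    push_cast
    rw [sub_eq_add_neg]
  · rw [arrowD_iff_of_ne hst, and_iff_right (hmem x), and_iff_right (hmem y),
      exists_orbit_zArrow_iff, sliceMap, sliceMap, rot_rotateBy_sliceDiag_iff hrot]

end Slices

lemma rotateBy_sliceDiag_eq_sliceDiag_E8 : ∀ (c : ZMod 16) (v w : TVert 1 2 4),
    rotateBy c (sliceDiag v) = sliceDiag w → c = 0 ∧ v = w := by
  decide

lemma rot_sliceDiag_rotateBy_sliceDiag_E8 : ∀ (c : ZMod 16) (v w : TVert 1 2 4),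
    Rot 1 (sliceDiag v) (rotateBy c (sliceDiag w)) ↔
      (c = 0 ∧ TArrow v w) ∨ (c = 1 ∧ TArrow w v) := by
  decide

/-- Theorem 4.2 for `E₈`. The quiver `Γ^{16}_{1,2,4}` of
coloured oriented single and paired diagonals of a regular 16-gon is
isomorphic, as a stable translation quiver, to `ℤ E₈ / ⟨τ^{-16}⟩`, where
`E₈ = T_{1,2,4}`.  (This quotient is the AR-quiver of the cluster category
`C_{E₈} = D^b(mod k E₈)/τ^{-1}Σ`, on which `Σ` acts as `τ^{-15}`.) -/
theorem gamma_16gon_iso_ZE8_quotient :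
    ∃ φ : ℤ × TVert 1 2 4 → Diag 16,
      IsQuotientIso 1 2 4 16 TArrow
        (shiftPerm 16 (1 : Equiv.Perm (TVert 1 2 4))) φ :=
  ⟨_, isQuotientIso_sliceMap (by decide) rotateBy_sliceDiag_eq_sliceDiag_E8
    rot_sliceDiag_rotateBy_sliceDiag_E8⟩
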